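/- For r > 0 with r ≠ 1, the function β(x,y) = −2+4r²−2r⁴+2x²+2r²x²+2y²+2r²y²−2x²y² is strictly positive on the open square |r−1| < x < r+1, |r−1| < y < r+1. -/

import Mathlib

/-!
With `u = 1 + r² - x²` and `v = 1 + r² - y²` one has `β = 2((2r)² - u v)`, and the square
`|r - 1| < x, y < r + 1` is exactly where `|u|, |v| < 2r`, so `u v < (2r)²`.
-/

theorem mul_lt_sq_of_abs_lt_of_abs_lt {α : Type*} [Ring α] [LinearOrder α] [IsStrictOrderedRing α]
    {u v c : α} (hu : |u| < c) (hv : |v| < c) : u * v < c ^ 2 :=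
  calc u * v ≤ |u| * |v| := (le_abs_self _).trans (abs_mul u v).le
    _ < c * c := mul_lt_mul'' hu hv (abs_nonneg u) (abs_nonneg v)
    _ = c ^ 2 := (sq c).symm

theorem abs_one_add_sq_sub_sq_lt {r x : ℝ} (h₁ : |r - 1| < x) (h₂ : x < r + 1) :
    |1 + r ^ 2 - x ^ 2| < 2 * r := by
  have hx : 0 ≤ x := (abs_nonneg _).trans h₁.le
  have hlower : (r - 1) ^ 2 < x ^ 2 := by
    simpa only [sq_abs] using pow_lt_pow_left₀ h₁ (abs_nonneg _) two_ne_zero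
  have hupper : x ^ 2 < (r + 1) ^ 2 := pow_lt_pow_left₀ h₂ hx two_ne_zero
  rw [abs_lt]
  constructor <;> linarith

theorem beta_pos_on_open_square_general
    (r x y : ℝ)
    (hx1 : |r - 1| < x) (hx2 : x < r + 1)
    (hy1 : |r - 1| < y) (hy2 : y < r + 1) :
    0 < -2 + 4*r^2 - 2*r^4 + 2*x^2 + 2*r^2*x^2 + 2*y^2 + 2*r^2*y^2 - 2*x^2*y^2 := by
  have key : (1 + r ^ 2 - x ^ 2) * (1 + r ^ 2 - y ^ 2) < (2 * r) ^ 2 :=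
    mul_lt_sq_of_abs_lt_of_abs_lt (abs_one_add_sq_sub_sq_lt hx1 hx2)
      (abs_one_add_sq_sub_sq_lt hy1 hy2)
  linear_combination 2 * key

/-- For `r > 0` with `r ≠ 1`, the coefficient
`β(x,y) = -2 + 4r² - 2r⁴ + 2x² + 2r²x² + 2y² + 2r²y² - 2x²y²`
is strictly positive on the open square `|r-1| < x < r+1`, `|r-1| < y < r+1`. -/
theorem beta_pos_on_open_square
    (r x y : ℝ) (hr : 0 < r) (hr1 : r ≠ 1)
    (hx1 : |r - 1| < x) (hx2 : x < r + 1)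
    (hy1 : |r - 1| < y) (hy2 : y < r + 1) :
    0 < -2 + 4*r^2 - 2*r^4 + 2*x^2 + 2*r^2*x^2 + 2*y^2 + 2*r^2*y^2 - 2*x^2*y^2 :=
  beta_pos_on_open_square_general r x y hx1 hx2 hy1 hy2
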